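/- In the measurement model with system state ρ_S = (1/2)𝟙, memory ρ_M = |0⟩⟨0| ⊗ (1/2)𝟙, system–memory unitary U_SM = (|0⟩⟨0|⊗𝟙₂ + |1⟩⟨1|⊗σ₁)⊗𝟙₂ and measurement operators P̃± = E± ⊗ (1/2)𝟙₂ with E± = ((1−λ±x)/2)𝟙 + λΠ±(Θ,Φ), the normalized post-measurement reduced memory state is ρ′_M = [(1/2)𝟙 + s·Q(Θ,Φ)] ⊗ (1/2)𝟙 where s = xλ/(1+x²+λ²), and its eigenvalues are (1/4)(1+2s) with multiplicity two and (1/4)(1−2s) with multiplicity two, independent of Θ and Φ. -/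

import Mathlib

open Matrix

/-- Pauli matrix σ₁. -/
noncomputable def σ1 : Matrix (Fin 2) (Fin 2) ℂ := !![0, 1; 1, 0]
/-- Pauli matrix σ₂. -/
noncomputable def σ2 : Matrix (Fin 2) (Fin 2) ℂ := !![0, -Complex.I; Complex.I, 0]
/-- Pauli matrix σ₃. -/
noncomputable def σ3 : Matrix (Fin 2) (Fin 2) ℂ := !![1, 0; 0, -1]

/-- The three Pauli matrices, indexed. -/
noncomputable def pauli : Fin 3 → Matrix (Fin 2) (Fin 2) ℂ
  | 0 => σ1
  | 1 => σ2
  | 2 => σ3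

/-- `v · σ = v₁σ₁ + v₂σ₂ + v₃σ₃` for `v ∈ ℝ³`. -/
noncomputable def dotσ (v : Fin 3 → ℝ) : Matrix (Fin 2) (Fin 2) ℂ :=
  ∑ i, (v i : ℂ) • pauli i

/-- Euclidean norm of `v ∈ ℝ³`. -/
noncomputable def enorm3 (v : Fin 3 → ℝ) : ℝ := Real.sqrt (v 0 ^ 2 + v 1 ^ 2 + v 2 ^ 2)

open Kronecker

/-- The dichotomic observable `Q(Θ,Φ)`. -/
noncomputable def Qobs (Θ Φ : ℝ) : Matrix (Fin 2) (Fin 2) ℂ :=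
  !![(Real.cos Θ : ℂ), Complex.exp (Φ * Complex.I) * (Real.sin Θ : ℂ);
     Complex.exp (-Φ * Complex.I) * (Real.sin Θ : ℂ), -(Real.cos Θ : ℂ)]

/-- Biased–unsharp POVM element `E_s = ((1−λ+sx)/2)𝟙 + λΠ_s`, with
`Π_s = (1/2)(𝟙 + s Q(Θ,Φ))` and sign `s = ±1`. -/
noncomputable def Ebu (x l Θ Φ s : ℝ) : Matrix (Fin 2) (Fin 2) ℂ :=
  (((1 - l + s * x)/2 : ℝ) : ℂ) • 1 + (l : ℂ) • ((1/2 : ℂ) • (1 + (s : ℂ) • Qobs Θ Φ))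

/-- `|0⟩⟨0|`. -/
noncomputable def ket0bra0 : Matrix (Fin 2) (Fin 2) ℂ := !![1, 0; 0, 0]
/-- `|1⟩⟨1|`. -/
noncomputable def ket1bra1 : Matrix (Fin 2) (Fin 2) ℂ := !![0, 0; 0, 1]

/-- The system–memory unitary `U_SM = (|0⟩⟨0|⊗𝟙₂ + |1⟩⟨1|⊗σ₁)⊗𝟙₂`. -/
noncomputable def USM : Matrix (Fin 2 × Fin 2 × Fin 2) (Fin 2 × Fin 2 × Fin 2) ℂ :=
  ket0bra0 ⊗ₖ ((1 : Matrix (Fin 2) (Fin 2) ℂ) ⊗ₖ (1 : Matrix (Fin 2) (Fin 2) ℂ))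
    + ket1bra1 ⊗ₖ (σ1 ⊗ₖ (1 : Matrix (Fin 2) (Fin 2) ℂ))

/-- The initial system ⊗ memory state `ρ_S ⊗ ρ_M = (𝟙/2) ⊗ (|0⟩⟨0| ⊗ 𝟙/2)`. -/
noncomputable def rho0 : Matrix (Fin 2 × Fin 2 × Fin 2) (Fin 2 × Fin 2 × Fin 2) ℂ :=
  ((1/2 : ℂ) • (1 : Matrix (Fin 2) (Fin 2) ℂ)) ⊗ₖ
    (ket0bra0 ⊗ₖ ((1/2 : ℂ) • (1 : Matrix (Fin 2) (Fin 2) ℂ)))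

/-- The measurement operator `𝟙 ⊗ P̃_s = 𝟙 ⊗ (E_s ⊗ (1/2)𝟙₂)` on system ⊗ memory. -/
noncomputable def Ptilde (x l Θ Φ s : ℝ) :
    Matrix (Fin 2 × Fin 2 × Fin 2) (Fin 2 × Fin 2 × Fin 2) ℂ :=
  (1 : Matrix (Fin 2) (Fin 2) ℂ) ⊗ₖ
    (Ebu x l Θ Φ s ⊗ₖ ((1/2 : ℂ) • (1 : Matrix (Fin 2) (Fin 2) ℂ)))

/-- The unnormalized post-measurement joint state
`ρ′_SM = Σ_{s=±1} (𝟙⊗P̃_s) U_SM (ρ_S⊗ρ_M) U_SM† (𝟙⊗P̃_s)`. -/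
noncomputable def rhoSM (x l Θ Φ : ℝ) :
    Matrix (Fin 2 × Fin 2 × Fin 2) (Fin 2 × Fin 2 × Fin 2) ℂ :=
  Ptilde x l Θ Φ 1 * (USM * rho0 * USMᴴ) * Ptilde x l Θ Φ 1
    + Ptilde x l Θ Φ (-1) * (USM * rho0 * USMᴴ) * Ptilde x l Θ Φ (-1)

/-- The unnormalized post-measurement reduced memory state (partial trace over the system). -/
noncomputable def rhoMred (x l Θ Φ : ℝ) : Matrix (Fin 2 × Fin 2) (Fin 2 × Fin 2) ℂ :=
  Matrix.of fun m n => ∑ i : Fin 2, rhoSM x l Θ Φ (i, m) (i, n)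

/-!
The controlled-σ₁ coupling copies the computational basis of the maximally mixed system into the
first memory qubit, so before the measurement the memory marginal is maximally mixed, `𝟙/4`.
The measurement operators `𝟙 ⊗ P̃±` act trivially on the system, hence commute with the partial
trace over it, and the reduced memory state is `(1/16)(E₊² + E₋²) ⊗ 𝟙`. Writing
`E± = ((1 ± x)/2)𝟙 ± (λ/2)Q` and using `Q² = 𝟙` this is `((1+x²+λ²)/32)(𝟙 + 2sQ) ⊗ 𝟙`.
Since `tr Q = 0` and `det Q = -1`, the normalized state `((1/4)𝟙 + (s/2)Q) ⊗ 𝟙` has eigenvalues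
`(1 ± 2s)/4`, each doubled by the factor `𝟙`.
-/

namespace Matrix

variable {ι m n R : Type*} [Fintype ι]

def partialTrace [AddCommMonoid R] (A : Matrix (ι × m) (ι × n) R) : Matrix m n R :=
  of fun i j => ∑ k, A (k, i) (k, j)

section Semiring

variable [Semiring R]

@[simp]
theorem partialTrace_add (A B : Matrix (ι × m) (ι × n) R) :
    partialTrace (A + B) = partialTrace A + partialTrace B := by
  ext; simp [partialTrace, Finset.sum_add_distrib]

@[simp]
theorem partialTrace_smul {S : Type*} [DistribSMul S R] (c : S) (A : Matrix (ι × m) (ι × n) R) :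
    partialTrace (c • A) = c • partialTrace A := by
  ext; simp [partialTrace, Finset.smul_sum]

theorem trace_partialTrace [Fintype m] (A : Matrix (ι × m) (ι × m) R) :
    trace (partialTrace A) = trace A := by
  simp only [trace, diag, partialTrace, of_apply, Fintype.sum_prod_type]
  exact Finset.sum_comm

end Semiring

section CommSemiring

variable [CommSemiring R]

theorem partialTrace_kronecker (A : Matrix ι ι R) (B : Matrix m n R) :
    partialTrace (A ⊗ₖ B) = trace A • B := by
  ext; simp [partialTrace, trace, Finset.sum_mul]

theorem partialTrace_one_kronecker_mul_mul [DecidableEq ι] [Fintype m] [Fintype n] {p q : Type*}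
    (X : Matrix p m R) (A : Matrix (ι × m) (ι × n) R) (Y : Matrix n q R) :
    partialTrace ((1 : Matrix ι ι R) ⊗ₖ X * A * (1 : Matrix ι ι R) ⊗ₖ Y)
      = X * partialTrace A * Y := by
  ext i j
  simp only [partialTrace, of_apply, mul_apply, kroneckerMap_apply, one_apply, ite_mul, mul_ite,
    one_mul, zero_mul, mul_zero, Fintype.sum_prod_type, Finset.sum_ite_irrel, Finset.sum_const_zero,
    Finset.sum_ite_eq, Finset.sum_ite_eq', Finset.mem_univ, if_true, Finset.sum_mul,
    Finset.mul_sum]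
  rw [Finset.sum_comm]
  exact Finset.sum_congr rfl fun _ _ => Finset.sum_comm

end CommSemiring

section CommRing

variable [CommRing R]

open Polynomial

theorem charpoly_kronecker_one [Fintype n] [DecidableEq n] [Fintype m] [DecidableEq m]
    (A : Matrix n n R) :
    (A ⊗ₖ (1 : Matrix m m R)).charpoly = A.charpoly ^ Fintype.card m := by
  have hblock :
      charmatrix (blockDiagonal fun _ : m => A) = blockDiagonal fun _ => charmatrix A := by
    ext ⟨i, k⟩ ⟨j, k'⟩
    by_cases hk : k = k' <;> by_cases hij : i = j <;> simp [blockDiagonal_apply, hk, hij]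
  rw [charpoly, kronecker_one, hblock, det_blockDiagonal, Finset.prod_const, Finset.card_univ,
    charpoly]

theorem charpoly_smul_one_add_smul [Nontrivial R] (A : Matrix (Fin 2) (Fin 2) R)
    (htr : A.trace = 0) (hdet : A.det = -1) (a b : R) :
    (a • 1 + b • A).charpoly = (X - C (a + b)) * (X - C (a - b)) := by
  rw [trace_fin_two] at htr
  rw [det_fin_two] at hdet
  have htr' : (a • 1 + b • A).trace = (a + b) + (a - b) := by
    simp only [trace_add, trace_smul, trace_one, Fintype.card_fin, Nat.cast_ofNat, smul_eq_mul,
      trace_fin_two]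
    linear_combination b * htr
  have hdet' : (a • 1 + b • A).det = (a + b) * (a - b) := by
    simp only [det_fin_two, add_apply, smul_apply, one_apply_eq, one_apply_ne zero_ne_one,
      one_apply_ne one_ne_zero, smul_eq_mul, mul_one, mul_zero, zero_add]
    linear_combination a * b * htr + b ^ 2 * hdet
  rw [charpoly_fin_two, htr', hdet', C_add, C_mul]
  ring

end CommRing

end Matrix

theorem Qobs_trace (Θ Φ : ℝ) : (Qobs Θ Φ).trace = 0 := by
  simp [Qobs, trace_fin_two]

theorem exp_neg_mul_I_mul_exp_mul_I (Φ : ℝ) :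
    Complex.exp (-Φ * Complex.I) * Complex.exp (Φ * Complex.I) = 1 := by
  rw [← Complex.exp_add, neg_mul, neg_add_cancel, Complex.exp_zero]

theorem Qobs_det (Θ Φ : ℝ) : (Qobs Θ Φ).det = -1 := by
  rw [Qobs, det_fin_two_of]
  push_cast
  linear_combination (-Complex.sin Θ ^ 2) * exp_neg_mul_I_mul_exp_mul_I Φ
    - Complex.cos_sq_add_sin_sq (Θ : ℂ)

theorem Qobs_mul_self (Θ Φ : ℝ) : Qobs Θ Φ * Qobs Θ Φ = 1 := by
  have hCH := (Qobs Θ Φ).aeval_self_charpoly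
  rw [← sq, ← sub_eq_zero, sub_eq_add_neg]
  simpa [charpoly_fin_two, Qobs_trace, Qobs_det] using hCH

theorem Ebu_eq (x l Θ Φ s : ℝ) :
    Ebu x l Θ Φ s = ((1 + s * x) / 2 : ℂ) • 1 + (s * l / 2 : ℂ) • Qobs Θ Φ := by
  rw [Ebu]; push_cast; module

theorem Ebu_mul_self_add_Ebu_mul_self (x l Θ Φ : ℝ) :
    Ebu x l Θ Φ 1 * Ebu x l Θ Φ 1 + Ebu x l Θ Φ (-1) * Ebu x l Θ Φ (-1)
      = ((1 + x ^ 2 + l ^ 2) / 2 : ℂ) • 1 + (x * l : ℂ) • Qobs Θ Φ := by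
  simp only [Ebu_eq, add_mul, mul_add, smul_mul_smul_comm, one_mul, mul_smul_one, Qobs_mul_self]
  push_cast
  module

theorem ket0bra0_mul_self : ket0bra0 * ket0bra0 = ket0bra0 := by
  ext i j; fin_cases i <;> fin_cases j <;> simp [ket0bra0, mul_apply]

theorem ket1bra1_mul_self : ket1bra1 * ket1bra1 = ket1bra1 := by
  ext i j; fin_cases i <;> fin_cases j <;> simp [ket1bra1, mul_apply]

theorem ket0bra0_mul_ket1bra1 : ket0bra0 * ket1bra1 = 0 := by
  ext i j; fin_cases i <;> fin_cases j <;> simp [ket0bra0, ket1bra1, mul_apply]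

theorem ket1bra1_mul_ket0bra0 : ket1bra1 * ket0bra0 = 0 := by
  ext i j; fin_cases i <;> fin_cases j <;> simp [ket0bra0, ket1bra1, mul_apply]

theorem conjTranspose_ket0bra0 : ket0bra0ᴴ = ket0bra0 := by
  ext i j; fin_cases i <;> fin_cases j <;> simp [ket0bra0]

theorem conjTranspose_ket1bra1 : ket1bra1ᴴ = ket1bra1 := by
  ext i j; fin_cases i <;> fin_cases j <;> simp [ket1bra1]

theorem conjTranspose_σ1 : σ1ᴴ = σ1 := by
  ext i j; fin_cases i <;> fin_cases j <;> simp [σ1]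

theorem σ1_mul_ket0bra0_mul_σ1 : σ1 * ket0bra0 * σ1 = ket1bra1 := by
  ext i j; fin_cases i <;> fin_cases j <;> simp [σ1, ket0bra0, ket1bra1, mul_apply]

theorem ket0bra0_add_ket1bra1 : ket0bra0 + ket1bra1 = 1 := by
  ext i j; fin_cases i <;> fin_cases j <;> simp [ket0bra0, ket1bra1, one_apply]

theorem trace_ket0bra0 : ket0bra0.trace = 1 := by
  simp [ket0bra0, trace_fin_two]

theorem trace_ket1bra1 : ket1bra1.trace = 1 := by
  simp [ket1bra1, trace_fin_two]

theorem USM_mul_rho0_mul_conjTranspose : USM * rho0 * USMᴴ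
    = (1/2 : ℂ) • (ket0bra0 ⊗ₖ (ket0bra0 ⊗ₖ ((1/2 : ℂ) • (1 : Matrix (Fin 2) (Fin 2) ℂ))))
      + (1/2 : ℂ) • (ket1bra1 ⊗ₖ (ket1bra1 ⊗ₖ ((1/2 : ℂ) • (1 : Matrix (Fin 2) (Fin 2) ℂ)))) := by
  unfold USM rho0
  simp only [conjTranspose_add, conjTranspose_kronecker, conjTranspose_ket0bra0,
    conjTranspose_ket1bra1, conjTranspose_σ1, conjTranspose_one, add_mul, mul_add,
    ← mul_kronecker_mul, smul_kronecker, kronecker_smul, Matrix.mul_smul, Matrix.smul_mul,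
    one_mul, mul_one, ket0bra0_mul_self, ket1bra1_mul_self, ket0bra0_mul_ket1bra1,
    ket1bra1_mul_ket0bra0, zero_kronecker, smul_zero, add_zero, zero_add, smul_smul, σ1_mul_ket0bra0_mul_σ1]

theorem partialTrace_USM_mul_rho0_mul_conjTranspose :
    partialTrace (USM * rho0 * USMᴴ) = (1/4 : ℂ) • 1 := by
  rw [USM_mul_rho0_mul_conjTranspose, partialTrace_add, partialTrace_smul, partialTrace_smul,
    partialTrace_kronecker, partialTrace_kronecker, trace_ket0bra0, trace_ket1bra1, one_smul,
    one_smul, ← smul_add, ← add_kronecker, ket0bra0_add_ket1bra1, kronecker_smul,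
    one_kronecker_one, smul_smul]
  norm_num

theorem rhoMred_eq_kronecker (x l Θ Φ : ℝ) : rhoMred x l Θ Φ
    = (1/16 : ℂ) • ((Ebu x l Θ Φ 1 * Ebu x l Θ Φ 1 + Ebu x l Θ Φ (-1) * Ebu x l Θ Φ (-1))
        ⊗ₖ (1 : Matrix (Fin 2) (Fin 2) ℂ)) := by
  change partialTrace (rhoSM x l Θ Φ) = _
  rw [rhoSM, Ptilde, Ptilde, partialTrace_add, partialTrace_one_kronecker_mul_mul,
    partialTrace_one_kronecker_mul_mul, partialTrace_USM_mul_rho0_mul_conjTranspose]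
  simp only [Matrix.mul_smul, Matrix.smul_mul, Matrix.mul_one, ← mul_kronecker_mul, add_kronecker,
    kronecker_smul, smul_smul, smul_add]
  norm_num

theorem rhoMred_eq_smul (x l Θ Φ : ℝ) : rhoMred x l Θ Φ
    = (((1 + x ^ 2 + l ^ 2) / 8 : ℝ) : ℂ) •
      (((1/2 : ℂ) • (1 : Matrix (Fin 2) (Fin 2) ℂ)
          + ((x * l / (1 + x ^ 2 + l ^ 2) : ℝ) : ℂ) • Qobs Θ Φ) ⊗ₖ
        ((1/2 : ℂ) • (1 : Matrix (Fin 2) (Fin 2) ℂ))) := by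
  have hden : (1 + x ^ 2 + l ^ 2 : ℂ) ≠ 0 := by
    exact_mod_cast (by positivity : (0 : ℝ) < 1 + x ^ 2 + l ^ 2).ne'
  rw [rhoMred_eq_kronecker, Ebu_mul_self_add_Ebu_mul_self]
  simp only [add_kronecker, smul_kronecker, kronecker_smul, smul_add, smul_smul]
  push_cast
  match_scalars <;> field_simp <;> ring

theorem trace_rhoSM (x l Θ Φ : ℝ) :
    (rhoSM x l Θ Φ).trace = (((1 + x ^ 2 + l ^ 2) / 8 : ℝ) : ℂ) := by
  rw [← trace_partialTrace]
  change (rhoMred x l Θ Φ).trace = _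
  rw [rhoMred_eq_smul, trace_smul, trace_kronecker, trace_add, trace_smul, trace_smul, Qobs_trace,
    trace_one, Fintype.card_fin]
  norm_num

theorem inv_trace_rhoSM_smul_rhoMred (x l Θ Φ : ℝ) :
    ((rhoSM x l Θ Φ).trace)⁻¹ • rhoMred x l Θ Φ
      = ((1/2 : ℂ) • (1 : Matrix (Fin 2) (Fin 2) ℂ)
          + ((x * l / (1 + x ^ 2 + l ^ 2) : ℝ) : ℂ) • Qobs Θ Φ) ⊗ₖ
        ((1/2 : ℂ) • (1 : Matrix (Fin 2) (Fin 2) ℂ)) := by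
  have hnorm : (1 + x ^ 2 + l ^ 2) / 8 ≠ (0 : ℝ) := by positivity
  rw [trace_rhoSM, rhoMred_eq_smul, inv_smul_smul₀ (by exact_mod_cast hnorm)]

open Polynomial in
theorem stmt15_general (x l Θ Φ : ℝ) :
    ((rhoSM x l Θ Φ).trace)⁻¹ • rhoMred x l Θ Φ
        = ((1/2 : ℂ) • (1 : Matrix (Fin 2) (Fin 2) ℂ)
            + ((x * l / (1 + x ^ 2 + l ^ 2) : ℝ) : ℂ) • Qobs Θ Φ) ⊗ₖ
          ((1/2 : ℂ) • (1 : Matrix (Fin 2) (Fin 2) ℂ)) ∧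
    (((rhoSM x l Θ Φ).trace)⁻¹ • rhoMred x l Θ Φ).charpoly
        = (X - C (((1 + 2 * (x * l / (1 + x ^ 2 + l ^ 2)))/4 : ℝ) : ℂ)) ^ 2
            * (X - C (((1 - 2 * (x * l / (1 + x ^ 2 + l ^ 2)))/4 : ℝ) : ℂ)) ^ 2 := by
  refine ⟨inv_trace_rhoSM_smul_rhoMred x l Θ Φ, ?_⟩
  rw [inv_trace_rhoSM_smul_rhoMred, kronecker_smul, ← smul_kronecker, smul_add, smul_smul,
    smul_smul, charpoly_kronecker_one,
    charpoly_smul_one_add_smul _ (Qobs_trace Θ Φ) (Qobs_det Θ Φ), Fintype.card_fin, mul_pow]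
  congr 4 <;> push_cast <;> ring

open Polynomial in
/-- The normalized post-measurement reduced memory state is
`[(1/2)𝟙 + s·Q(Θ,Φ)] ⊗ (1/2)𝟙` with `s = xλ/(1+x²+λ²)`, and its eigenvalues are
`(1/4)(1+2s)` and `(1/4)(1−2s)`, each with multiplicity two, independently of `Θ, Φ`. -/
theorem stmt15 (x l Θ Φ : ℝ) (hl : 0 ≤ l) :
    ((rhoSM x l Θ Φ).trace)⁻¹ • rhoMred x l Θ Φ
        = ((1/2 : ℂ) • (1 : Matrix (Fin 2) (Fin 2) ℂ)
            + ((x * l / (1 + x ^ 2 + l ^ 2) : ℝ) : ℂ) • Qobs Θ Φ) ⊗ₖ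
          ((1/2 : ℂ) • (1 : Matrix (Fin 2) (Fin 2) ℂ)) ∧
    (((rhoSM x l Θ Φ).trace)⁻¹ • rhoMred x l Θ Φ).charpoly
        = (X - C (((1 + 2 * (x * l / (1 + x ^ 2 + l ^ 2)))/4 : ℝ) : ℂ)) ^ 2
            * (X - C (((1 - 2 * (x * l / (1 + x ^ 2 + l ^ 2)))/4 : ℝ) : ℂ)) ^ 2 :=
  stmt15_general x l Θ Φ
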